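/- Let M be a connected matroid on a finite set E admitting a handle decomposition of length k ≥ 2. Then M has at least k + 1 pairwise disjoint non-disconnective handles: there exist handles H₀,…,H_k of M, pairwise disjoint, such that M∖H_i is connected for each i. -/

import Mathlib

/-!
Induction along the handle decomposition. If `F₁` is a circuit and `F₂ \ F₁` a handle, then any
two distinct circuits `C, D` of `M|F₂` through the handle cover `F₁` (eliminating a handle
element between them leaves a circuit inside `F₁`), so `F₁ \ C` and `F₁ \ D` are disjoint
non-disconnective handles of `M|F₂`, and `F₂ \ F₁` is a third one. When a handle `F \ F'` is
added, it is itself non-disconnective in `M|F`, and every non-disconnective handle `S` of `M|F'`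
contains one of `M|F`: the elements of `S` lying on the same circuits through `F \ F'` as a
well-chosen `s₀ ∈ S`. Shrinking the old handles keeps them disjoint, so each handle adds one.
-/

/-- A matroid on the finite ground set `E`, given by its independent sets. -/
structure FinMatroid (E : Type) [Fintype E] [DecidableEq E] where
  /-- The independent sets. -/
  Indep : Finset E → Prop
  /-- The empty set is independent. -/
  empty_indep : Indep ∅
  /-- Subsets of independent sets are independent. -/
  subset_indep : ∀ ⦃I J : Finset E⦄, Indep J → I ⊆ J → Indep I
  /-- The augmentation axiom. -/
  aug : ∀ ⦃I J : Finset E⦄, Indep I → Indep J → I.card < J.card →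
    ∃ e ∈ J, e ∉ I ∧ Indep (insert e I)

namespace FinMatroid

variable {E : Type} [Fintype E] [DecidableEq E] (M : FinMatroid E)

/-- A circuit: a minimal dependent set. -/
def IsCircuit (C : Finset E) : Prop :=
  ¬ M.Indep C ∧ ∀ D ⊂ C, M.Indep D

/-- A handle: a nonempty subset `H ⊆ E` such that every circuit meeting `H`
contains `H`. -/
def Handle (H : Finset E) : Prop :=
  H.Nonempty ∧ ∀ C : Finset E, M.IsCircuit C → (∃ x ∈ C, x ∈ H) → H ⊆ C

/-- The restriction `M|_F` is connected: `F` is nonempty and any two distinct elements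
of `F` lie on a common circuit contained in `F` (the circuits of `M|_F` are exactly the
circuits of `M` contained in `F`). -/
def ConnectedOn (F : Finset E) : Prop :=
  F.Nonempty ∧ ∀ e ∈ F, ∀ f ∈ F, e ≠ f →
    ∃ C : Finset E, M.IsCircuit C ∧ C ⊆ F ∧ e ∈ C ∧ f ∈ C

/-- The matroid is connected: the ground set is nonempty and any two distinct elements
lie on a common circuit. -/
def Connected : Prop :=
  M.ConnectedOn Finset.univ

/-- `H` is a handle of the restriction `M|_F`: `H` is a nonempty subset of `F` and every
circuit of `M|_F` (i.e. circuit of `M` contained in `F`) meeting `H` contains `H`. -/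
def HandleOn (F H : Finset E) : Prop :=
  H.Nonempty ∧ H ⊆ F ∧
    ∀ C : Finset E, M.IsCircuit C → C ⊆ F → (∃ x ∈ C, x ∈ H) → H ⊆ C

open Finset Function

theorem _root_.Fin.pairwise_disjoint_cons {α : Type*} [PartialOrder α] [OrderBot α] {n : ℕ}
    {a : α} {f : Fin n → α} (ha : ∀ i, Disjoint a (f i)) (hf : Pairwise (Disjoint on f)) :
    Pairwise (Disjoint on (Fin.cons a f : Fin (n + 1) → α)) := by
  intro i j hij
  cases i using Fin.cases <;> cases j using Fin.cases
  · exact absurd rfl hij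
  · exact ha _
  · exact (ha _).symm
  · exact hf (ne_of_apply_ne Fin.succ hij)

variable {M}

section Circuits

variable {C C₁ C₂ D : Finset E} {e f x : E}

def toMatroid (M : FinMatroid E) : Matroid E :=
  (IndepMatroid.ofFinset Set.univ M.Indep M.empty_indep M.subset_indep M.aug
    fun _ _ => Set.subset_univ _).matroid

theorem toMatroid_indep_iff {I : Finset E} : M.toMatroid.Indep I ↔ M.Indep I := by
  simp [toMatroid]

theorem isCircuit_iff_toMatroid : M.IsCircuit C ↔ M.toMatroid.IsCircuit C := by
  rw [Matroid.isCircuit_iff_forall_ssubset, Matroid.dep_iff, toMatroid_indep_iff]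
  refine ⟨fun ⟨hC, hsub⟩ => ⟨⟨hC, Set.subset_univ _⟩, fun I hI => ?_⟩,
    fun ⟨⟨hC, _⟩, hsub⟩ => ⟨hC, fun D hD => toMatroid_indep_iff.1 (hsub (coe_ssubset.2 hD))⟩⟩
  obtain ⟨I, rfl⟩ := I.toFinite.exists_finset_coe
  exact toMatroid_indep_iff.2 (hsub I (coe_ssubset.1 hI))

theorem IsCircuit.nonempty (hC : M.IsCircuit C) : C.Nonempty := by
  simpa using (isCircuit_iff_toMatroid.1 hC).nonempty

theorem IsCircuit.eq_of_subset (hC : M.IsCircuit C) (hD : M.IsCircuit D) (h : C ⊆ D) : C = D :=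
  by_contra fun hne => hC.1 (hD.2 C (ssubset_of_subset_of_ne h hne))

theorem IsCircuit.not_subset_of_mem (hC : M.IsCircuit C) (hD : M.IsCircuit D) (hxD : x ∈ D)
    (hxC : x ∉ C) : ¬ C ⊆ D :=
  fun h => hxC (hC.eq_of_subset hD h ▸ hxD)

theorem IsCircuit.connectedOn (hC : M.IsCircuit C) : M.ConnectedOn C :=
  ⟨hC.nonempty, fun _ he _ hf _ => ⟨C, hC, subset_rfl, he, hf⟩⟩

theorem IsCircuit.strong_elimination (h₁ : M.IsCircuit C₁) (h₂ : M.IsCircuit C₂) (he₁ : e ∈ C₁)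
    (he₂ : e ∈ C₂) (hf₁ : f ∈ C₁) (hf₂ : f ∉ C₂) :
    ∃ C, M.IsCircuit C ∧ C ⊆ (C₁ ∪ C₂).erase e ∧ f ∈ C := by
  rw [isCircuit_iff_toMatroid] at h₁ h₂
  obtain ⟨C, hCsub, hC, hfC⟩ := h₁.strong_elimination h₂ he₁ he₂ hf₁ hf₂
  obtain ⟨C, rfl⟩ := C.toFinite.exists_finset_coe
  refine ⟨C, isCircuit_iff_toMatroid.2 hC, ?_, hfC⟩
  rwa [← coe_subset, coe_erase, coe_union]

theorem IsCircuit.elimination (h₁ : M.IsCircuit C₁) (h₂ : M.IsCircuit C₂) (hne : C₁ ≠ C₂) (e : E) :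
    ∃ C, M.IsCircuit C ∧ C ⊆ (C₁ ∪ C₂).erase e := by
  rw [isCircuit_iff_toMatroid] at h₁ h₂
  obtain ⟨C, hCsub, hC⟩ := h₁.elimination h₂ (by simpa using hne) e
  obtain ⟨C, rfl⟩ := C.toFinite.exists_finset_coe
  exact ⟨C, isCircuit_iff_toMatroid.2 hC, by rwa [← coe_subset, coe_erase, coe_union]⟩

/-- Lying on a common circuit is a transitive relation. -/
theorem IsCircuit.exists_isCircuit_subset_union {C₁ C₂ : Finset E} {x a c : E}
    (h₁ : M.IsCircuit C₁) (h₂ : M.IsCircuit C₂) (hx₁ : x ∈ C₁) (hx₂ : x ∈ C₂) (ha : a ∈ C₁)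
    (hc : c ∈ C₂) :
    ∃ D, M.IsCircuit D ∧ D ⊆ C₁ ∪ C₂ ∧ a ∈ D ∧ c ∈ D := by
  by_cases hcC₁ : c ∈ C₁
  · exact ⟨C₁, h₁, subset_union_left, ha, hcC₁⟩
  by_cases haC₂ : a ∈ C₂
  · exact ⟨C₂, h₂, subset_union_right, haC₂, hc⟩
  obtain ⟨C₃, hC₃, hC₃sub, haC₃⟩ := h₁.strong_elimination h₂ hx₁ hx₂ ha haC₂
  obtain ⟨C₄, hC₄, hC₄sub, hcC₄⟩ := h₂.strong_elimination h₁ hx₂ hx₁ hc hcC₁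
  have hC₃U : C₃ ⊆ C₁ ∪ C₂ := hC₃sub.trans (erase_subset _ _)
  have hC₄U : C₄ ⊆ C₁ ∪ C₂ := (hC₄sub.trans (erase_subset _ _)).trans (union_comm C₂ C₁).le
  obtain ⟨y, hyC₃, hyC₁⟩ := not_subset.1 <|
    hC₃.not_subset_of_mem h₁ hx₁ fun h => (mem_erase.1 (hC₃sub h)).1 rfl
  have hyC₂ : y ∈ C₂ := (mem_union.1 (hC₃U hyC₃)).resolve_left hyC₁
  by_cases hyC₄ : y ∈ C₄
  · -- `C₃ ∪ C₄` avoids `x`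
    have : (C₃ ∪ C₄).card < (C₁ ∪ C₂).card := by
      refine (card_le_card (union_subset hC₃sub ?_)).trans_lt
        (card_erase_lt_of_mem (mem_union_left _ hx₁))
      rw [union_comm]; exact hC₄sub
    obtain ⟨D, hD, hDsub, haD, hcD⟩ :=
      hC₃.exists_isCircuit_subset_union hC₄ hyC₃ hyC₄ haC₃ hcC₄
    exact ⟨D, hD, hDsub.trans (union_subset hC₃U hC₄U), haD, hcD⟩
  · -- `C₁ ∪ C₄` avoids `y`
    obtain ⟨z, hzC₄, hzC₂⟩ := not_subset.1 <|
      hC₄.not_subset_of_mem h₂ hx₂ fun h => (mem_erase.1 (hC₄sub h)).1 rfl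
    have hzC₁ : z ∈ C₁ := (mem_union.1 (hC₄U hzC₄)).resolve_right hzC₂
    have : (C₁ ∪ C₄).card < (C₁ ∪ C₂).card := by
      refine (card_le_card fun w hw => mem_erase.2 ⟨?_, ?_⟩).trans_lt
        (card_erase_lt_of_mem (mem_union_right _ hyC₂))
      · rintro rfl
        exact (mem_union.1 hw).elim hyC₁ hyC₄
      · exact (mem_union.1 hw).elim (mem_union_left _) (hC₄U ·)
    obtain ⟨D, hD, hDsub, haD, hcD⟩ :=
      h₁.exists_isCircuit_subset_union hC₄ hzC₁ hzC₄ ha hcC₄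
    exact ⟨D, hD, hDsub.trans (union_subset subset_union_left hC₄U), haD, hcD⟩
termination_by (C₁ ∪ C₂).card

theorem connectedOn_of_hub {G : Finset E} {h₀ : E} (hh₀ : h₀ ∈ G)
    (hub : ∀ x ∈ G, x ≠ h₀ → ∃ D, M.IsCircuit D ∧ D ⊆ G ∧ x ∈ D ∧ h₀ ∈ D) :
    M.ConnectedOn G := by
  refine ⟨⟨h₀, hh₀⟩, fun e he f hf hef => ?_⟩
  rcases eq_or_ne e h₀ with rfl | he₀
  · obtain ⟨D, hD, hDG, hfD, heD⟩ := hub f hf hef.symm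
    exact ⟨D, hD, hDG, heD, hfD⟩
  rcases eq_or_ne f h₀ with rfl | hf₀
  · exact hub e he he₀
  obtain ⟨D₁, hD₁, hD₁G, heD₁, hh₀D₁⟩ := hub e he he₀
  obtain ⟨D₂, hD₂, hD₂G, hfD₂, hh₀D₂⟩ := hub f hf hf₀
  obtain ⟨D, hD, hDsub, heD, hfD⟩ := hD₁.exists_isCircuit_subset_union hD₂ hh₀D₁ hh₀D₂ heD₁ hfD₂
  exact ⟨D, hD, hDsub.trans (union_subset hD₁G hD₂G), heD, hfD⟩

end Circuits

def NondisconnectiveHandleOn (M : FinMatroid E) (F T : Finset E) : Prop :=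
  M.HandleOn F T ∧ M.ConnectedOn (F \ T)

structure IsHandleStep (M : FinMatroid E) (F' F : Finset E) : Prop where
  subset : F' ⊆ F
  connectedOn_left : M.ConnectedOn F'
  connectedOn : M.ConnectedOn F
  handleOn : M.HandleOn F (F \ F')

structure IsNewCircuit (M : FinMatroid E) (F' F C : Finset E) : Prop where
  isCircuit : M.IsCircuit C
  subset : C ⊆ F
  not_subset : ¬ C ⊆ F'

section HandleStep

variable {F' F C D S : Finset E} {h₀ : E}

theorem IsHandleStep.sdiff_subset_of_isNewCircuit (h : M.IsHandleStep F' F)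
    (hC : M.IsNewCircuit F' F C) : F \ F' ⊆ C := by
  obtain ⟨x, hxC, hxF'⟩ := not_subset.1 hC.not_subset
  exact h.handleOn.2.2 C hC.isCircuit hC.subset ⟨x, hxC, mem_sdiff.2 ⟨hC.subset hxC, hxF'⟩⟩

theorem IsHandleStep.isNewCircuit_iff (h : M.IsHandleStep F' F) (hh₀ : h₀ ∈ F \ F')
    (hC : M.IsCircuit C) (hCF : C ⊆ F) : M.IsNewCircuit F' F C ↔ h₀ ∈ C :=
  ⟨fun hnew => h.sdiff_subset_of_isNewCircuit hnew hh₀,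
    fun hh₀C => ⟨hC, hCF, fun hCF' => (mem_sdiff.1 hh₀).2 (hCF' hh₀C)⟩⟩

theorem IsHandleStep.subset_left_of_notMem (h : M.IsHandleStep F' F) (hh₀ : h₀ ∈ F \ F')
    (hC : M.IsCircuit C) (hCF : C ⊆ F) (hh₀C : h₀ ∉ C) : C ⊆ F' :=
  by_contra fun hCF' => hh₀C ((h.isNewCircuit_iff hh₀ hC hCF).1 ⟨hC, hCF, hCF'⟩)

theorem IsHandleStep.exists_mem_left (h : M.IsHandleStep F' F) (hC : M.IsNewCircuit F' F C) :
    ∃ t ∈ C, t ∈ F' := by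
  by_contra! hCF'
  obtain ⟨c, hc⟩ := hC.isCircuit.nonempty
  obtain ⟨f, hf⟩ := h.connectedOn_left.1
  obtain ⟨D, hD, hDF, hcD, hfD⟩ :=
    h.connectedOn.2 c (hC.subset hc) f (h.subset hf) fun hcf => hCF' c hc (hcf ▸ hf)
  -- `C` lies in the handle, and every new circuit contains the handle
  have hCD : C ⊆ D := fun y hy =>
    h.sdiff_subset_of_isNewCircuit ⟨hD, hDF, fun hDF' => hCF' c hc (hDF' hcD)⟩
      (mem_sdiff.2 ⟨hC.subset hy, hCF' y hy⟩)
  exact hCF' f (hC.isCircuit.eq_of_subset hD hCD ▸ hfD) hf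

theorem IsHandleStep.exists_isCircuit_subset_inter_union (h : M.IsHandleStep F' F)
    (hC : M.IsNewCircuit F' F C) (hD : M.IsNewCircuit F' F D) (hne : C ≠ D) :
    ∃ G, M.IsCircuit G ∧ G ⊆ F' ∩ (C ∪ D) := by
  obtain ⟨h₀, hh₀⟩ := h.handleOn.1
  obtain ⟨G, hG, hGsub⟩ := hC.isCircuit.elimination hD.isCircuit hne h₀
  have hGU : G ⊆ C ∪ D := hGsub.trans (erase_subset _ _)
  have hGF' : G ⊆ F' :=
    h.subset_left_of_notMem hh₀ hG (hGU.trans (union_subset hC.subset hD.subset))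
      fun hh₀G => (mem_erase.1 (hGsub hh₀G)).1 rfl
  exact ⟨G, hG, subset_inter hGF' hGU⟩

theorem IsHandleStep.nondisconnectiveHandleOn_sdiff_left (h : M.IsHandleStep F' F) :
    M.NondisconnectiveHandleOn F (F \ F') :=
  ⟨h.handleOn, by rw [Finset.sdiff_sdiff_eq_self h.subset]; exact h.connectedOn_left⟩

theorem IsHandleStep.subset_union_of_isCircuit (h : M.IsHandleStep F' F) (hF' : M.IsCircuit F')
    (hC : M.IsNewCircuit F' F C) (hD : M.IsNewCircuit F' F D) (hne : C ≠ D) : F' ⊆ C ∪ D := by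
  obtain ⟨G, hG, hGsub⟩ := h.exists_isCircuit_subset_inter_union hC hD hne
  rw [← hG.eq_of_subset hF' (hGsub.trans inter_subset_left)]
  exact hGsub.trans inter_subset_right

theorem IsHandleStep.nondisconnectiveHandleOn_of_isCircuit (h : M.IsHandleStep F' F)
    (hF' : M.IsCircuit F') (hD : M.IsNewCircuit F' F D) :
    M.NondisconnectiveHandleOn F (F' \ D) := by
  refine ⟨⟨?_, sdiff_subset.trans h.subset, ?_⟩, ?_⟩
  · obtain ⟨x, hxF', hxD⟩ := not_subset.1 fun hF'D =>
      hD.not_subset (hF'.eq_of_subset hD.isCircuit hF'D).ge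
    exact ⟨x, mem_sdiff.2 ⟨hxF', hxD⟩⟩
  · rintro C hC hCF ⟨x, hxC, hx⟩
    by_cases hCF' : C ⊆ F'
    · rw [hC.eq_of_subset hF' hCF']
      exact sdiff_subset
    · intro y hy
      have hCD : C ≠ D := by rintro rfl; exact (mem_sdiff.1 hx).2 hxC
      exact (mem_union.1 (h.subset_union_of_isCircuit hF' ⟨hC, hCF, hCF'⟩ hD hCD
        (mem_sdiff.1 hy).1)).resolve_right (mem_sdiff.1 hy).2
  · have hFD : F \ (F' \ D) = D := by
      ext x
      simp only [mem_sdiff, not_and, not_not]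
      refine ⟨fun ⟨hxF, hx⟩ => ?_, fun hxD => ⟨hD.subset hxD, fun _ => hxD⟩⟩
      by_cases hxF' : x ∈ F'
      · exact hx hxF'
      · exact h.sdiff_subset_of_isNewCircuit hD (mem_sdiff.2 ⟨hxF, hxF'⟩)
    rw [hFD]
    exact hD.isCircuit.connectedOn

theorem IsHandleStep.exists_isNewCircuit_ne (h : M.IsHandleStep F' F) (hF' : M.IsCircuit F') :
    ∃ C D, M.IsNewCircuit F' F C ∧ M.IsNewCircuit F' F D ∧ C ≠ D := by
  obtain ⟨h₀, hh₀⟩ := h.handleOn.1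
  obtain ⟨f, hf⟩ := hF'.nonempty
  obtain ⟨C, hC, hCF, hh₀C, hfC⟩ := h.connectedOn.2 h₀ (mem_sdiff.1 hh₀).1 f (h.subset hf)
    fun hh₀f => (mem_sdiff.1 hh₀).2 (hh₀f ▸ hf)
  have hCnew := (h.isNewCircuit_iff hh₀ hC hCF).2 hh₀C
  obtain ⟨D, hD, hDsub⟩ := hC.elimination hF' (fun hCF' => hCnew.not_subset hCF'.le) f
  have hfD : f ∉ D := fun hfD => (mem_erase.1 (hDsub hfD)).1 rfl
  refine ⟨C, D, hCnew,
    ⟨hD, (hDsub.trans (erase_subset _ _)).trans (union_subset hCF h.subset),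
      hD.not_subset_of_mem hF' hf hfD⟩, ?_⟩
  rintro rfl
  exact hfD hfC

theorem IsHandleStep.exists_disjoint_nondisconnectiveHandleOn (h : M.IsHandleStep F' F)
    (hF' : M.IsCircuit F') :
    ∃ T₁ T₂, Disjoint T₁ T₂ ∧ T₁ ⊆ F' ∧ T₂ ⊆ F' ∧
      M.NondisconnectiveHandleOn F T₁ ∧ M.NondisconnectiveHandleOn F T₂ := by
  obtain ⟨C, D, hC, hD, hne⟩ := h.exists_isNewCircuit_ne hF'
  refine ⟨F' \ C, F' \ D, disjoint_left.2 fun x hxC hxD => ?_, sdiff_subset, sdiff_subset,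
    h.nondisconnectiveHandleOn_of_isCircuit hF' hC, h.nondisconnectiveHandleOn_of_isCircuit hF' hD⟩
  obtain ⟨hxF', hxC⟩ := mem_sdiff.1 hxC
  exact (mem_union.1 (h.subset_union_of_isCircuit hF' hC hD hne hxF')).elim hxC (mem_sdiff.1 hxD).2

theorem HandleOn.exists_isCircuit_ssuperset {S : Finset E} (hS : M.HandleOn F' S)
    (hF' : M.ConnectedOn F') (hne : (F' \ S).Nonempty) :
    ∃ O, M.IsCircuit O ∧ O ⊆ F' ∧ S ⊂ O := by
  obtain ⟨s, hs⟩ := hS.1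
  obtain ⟨w, hw⟩ := hne
  obtain ⟨O, hO, hOF', hsO, hwO⟩ := hF'.2 s (hS.2.1 hs) w (mem_sdiff.1 hw).1
    fun hsw => (mem_sdiff.1 hw).2 (hsw ▸ hs)
  have hSO : S ⊆ O := hS.2.2 O hO hOF' ⟨s, hsO, hs⟩
  exact ⟨O, hO, hOF', (ssubset_iff_of_subset hSO).2 ⟨w, hwO, (mem_sdiff.1 hw).2⟩⟩

/-- Eliminating `s₀` between `C` and a circuit `O ⊇ S` of `M|F'` gives a new circuit, since any
circuit of `M|F'` through `s ∈ S` would contain `s₀`. -/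
theorem IsHandleStep.exists_isNewCircuit_mem_notMem (h : M.IsHandleStep F' F)
    (hS : M.HandleOn F' S) {O : Finset E} (hO : M.IsCircuit O) (hOF' : O ⊆ F') (hSO : S ⊆ O)
    (hC : M.IsNewCircuit F' F C) {s₀ s : E} (hs₀ : s₀ ∈ S) (hs : s ∈ S) (hs₀C : s₀ ∈ C)
    (hsC : s ∉ C) : ∃ C', M.IsNewCircuit F' F C' ∧ s ∈ C' ∧ s₀ ∉ C' := by
  obtain ⟨G, hG, hGsub, hsG⟩ := hO.strong_elimination hC.isCircuit (hSO hs₀) hs₀C (hSO hs) hsC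
  have hs₀G : s₀ ∉ G := fun hs₀G => (mem_erase.1 (hGsub hs₀G)).1 rfl
  refine ⟨G, ⟨hG, (hGsub.trans (erase_subset _ _)).trans (union_subset (hOF'.trans h.subset)
    hC.subset), fun hGF' => hs₀G (hS.2.2 G hG hGF' ⟨s, hsG, hs⟩ hs₀)⟩, hsG, hs₀G⟩

theorem IsHandleStep.eq_of_inter_subset (h : M.IsHandleStep F' F) (hS : M.HandleOn F' S)
    (hSc : ¬ M.IsCircuit S) {C D : Finset E} (hC : M.IsNewCircuit F' F C)
    (hD : M.IsNewCircuit F' F D) (hCS : C ∩ F' ⊆ S) (hDS : D ∩ F' ⊆ S) : C = D := by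
  by_contra hne
  obtain ⟨G, hG, hGsub⟩ := h.exists_isCircuit_subset_inter_union hC hD hne
  have hGS : G ⊆ S := by
    rw [inter_comm, union_inter_distrib_right] at hGsub
    exact hGsub.trans (union_subset hCS hDS)
  obtain ⟨g, hg⟩ := hG.nonempty
  have hSG : S ⊆ G := hS.2.2 G hG (hGsub.trans inter_subset_left) ⟨g, hg, hGS hg⟩
  exact hSc (Subset.antisymm hGS hSG ▸ hG)

/-- Otherwise, eliminating between `O ⊋ S` and a new circuit through `F' \ S` would give, for each
`s ∈ S`, a new circuit avoiding `s` that meets `F'` only inside `S`; but there is only one such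
circuit, and it meets `F'`. -/
theorem IsHandleStep.exists_isNewCircuit_mem_sdiff_notMem (h : M.IsHandleStep F' F)
    (hS : M.NondisconnectiveHandleOn F' S) :
    ∃ C₀, M.IsNewCircuit F' F C₀ ∧ (∃ w ∈ C₀, w ∈ F' \ S) ∧ ∃ s₀ ∈ S, s₀ ∉ C₀ := by
  by_contra! hcon
  obtain ⟨O, hO, hOF', hSO⟩ := hS.1.exists_isCircuit_ssuperset h.connectedOn_left hS.2.1
  obtain ⟨w, hwO, hwS⟩ := (ssubset_iff_of_subset hSO.subset).1 hSO
  obtain ⟨h₀, hh₀⟩ := h.handleOn.1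
  have hh₀F' : h₀ ∉ F' := (mem_sdiff.1 hh₀).2
  obtain ⟨C, hC, hCF, hh₀C, hwC⟩ := h.connectedOn.2 h₀ (mem_sdiff.1 hh₀).1 w
    (h.subset (hOF' hwO)) fun hh₀w => hh₀F' (hh₀w ▸ hOF' hwO)
  have hSC : S ⊆ C := fun s hs => hcon C ((h.isNewCircuit_iff hh₀ hC hCF).2 hh₀C)
    ⟨w, hwC, mem_sdiff.2 ⟨hOF' hwO, hwS⟩⟩ s hs
  have havoid : ∀ s ∈ S, ∃ G, M.IsNewCircuit F' F G ∧ G ∩ F' ⊆ S ∧ s ∉ G := by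
    intro s hs
    obtain ⟨G, hG, hGsub, hh₀G⟩ :=
      hC.strong_elimination hO (hSC hs) (hSO.subset hs) hh₀C fun hh₀O => hh₀F' (hOF' hh₀O)
    have hGnew : M.IsNewCircuit F' F G := (h.isNewCircuit_iff hh₀ hG
      ((hGsub.trans (erase_subset _ _)).trans (union_subset hCF (hOF'.trans h.subset)))).2 hh₀G
    have hsG : s ∉ G := fun hsG => (mem_erase.1 (hGsub hsG)).1 rfl
    refine ⟨G, hGnew, fun y hy => ?_, hsG⟩
    by_contra hyS
    exact hsG (hcon G hGnew ⟨y, (mem_inter.1 hy).1, mem_sdiff.2 ⟨(mem_inter.1 hy).2, hyS⟩⟩ s hs)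
  have hSc : ¬ M.IsCircuit S := fun hSc => hSO.ne (hSc.eq_of_subset hO hSO.subset)
  obtain ⟨s, hs⟩ := hS.1.1
  obtain ⟨G, hG, hGS, -⟩ := havoid s hs
  obtain ⟨t, htG, htF'⟩ := h.exists_mem_left hG
  obtain ⟨G', hG', hG'S, htG'⟩ := havoid t (hGS (mem_inter.2 ⟨htG, htF'⟩))
  exact htG' (h.eq_of_inter_subset hS.1 hSc hG hG' hGS hG'S ▸ htG)

open scoped Classical in
noncomputable def newCircuitTwins (M : FinMatroid E) (F' F S : Finset E) (s₀ : E) : Finset E :=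
  {s ∈ S | ∀ C, M.IsNewCircuit F' F C → (s ∈ C ↔ s₀ ∈ C)}

variable {s s₀ : E}

theorem mem_newCircuitTwins : s ∈ M.newCircuitTwins F' F S s₀ ↔
    s ∈ S ∧ ∀ C, M.IsNewCircuit F' F C → (s ∈ C ↔ s₀ ∈ C) := by
  classical
  rw [newCircuitTwins, mem_filter]

theorem newCircuitTwins_subset : M.newCircuitTwins F' F S s₀ ⊆ S :=
  fun _ hs => (mem_newCircuitTwins.1 hs).1

theorem IsNewCircuit.subset_sdiff_newCircuitTwins (hC : M.IsNewCircuit F' F C) (hs₀C : s₀ ∉ C) :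
    C ⊆ F \ M.newCircuitTwins F' F S s₀ :=
  fun _ hx => mem_sdiff.2
    ⟨hC.subset hx, fun hxT => hs₀C (((mem_newCircuitTwins.1 hxT).2 C hC).1 hx)⟩

theorem HandleOn.handleOn_newCircuitTwins (hS : M.HandleOn F' S) (hF'F : F' ⊆ F) (hs₀ : s₀ ∈ S) :
    M.HandleOn F (M.newCircuitTwins F' F S s₀) := by
  refine ⟨⟨s₀, mem_newCircuitTwins.2 ⟨hs₀, fun _ _ => Iff.rfl⟩⟩,
    (newCircuitTwins_subset.trans hS.2.1).trans hF'F, ?_⟩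
  rintro C hC hCF ⟨x, hxC, hxT⟩
  by_cases hCF' : C ⊆ F'
  · exact newCircuitTwins_subset.trans
      (hS.2.2 C hC hCF' ⟨x, hxC, newCircuitTwins_subset hxT⟩)
  · have hs₀C : s₀ ∈ C := ((mem_newCircuitTwins.1 hxT).2 C ⟨hC, hCF, hCF'⟩).1 hxC
    exact fun t ht => ((mem_newCircuitTwins.1 ht).2 C ⟨hC, hCF, hCF'⟩).2 hs₀C

theorem IsHandleStep.exists_isNewCircuit_of_mem_sdiff_newCircuitTwins (h : M.IsHandleStep F' F)
    (hS : M.NondisconnectiveHandleOn F' S) (hs₀ : s₀ ∈ S)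
    (hs : s ∈ S \ M.newCircuitTwins F' F S s₀) : ∃ C, M.IsNewCircuit F' F C ∧ s ∈ C ∧ s₀ ∉ C := by
  obtain ⟨hsS, hsT⟩ := mem_sdiff.1 hs
  obtain ⟨C, hC, hsep⟩ : ∃ C, M.IsNewCircuit F' F C ∧ ¬ (s ∈ C ↔ s₀ ∈ C) := by
    by_contra! hall
    exact hsT (mem_newCircuitTwins.2 ⟨hsS, hall⟩)
  by_cases hsC : s ∈ C
  · exact ⟨C, hC, hsC, fun hs₀C => hsep (iff_of_true hsC hs₀C)⟩
  · obtain ⟨O, hO, hOF', hSO⟩ := hS.1.exists_isCircuit_ssuperset h.connectedOn_left hS.2.1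
    exact h.exists_isNewCircuit_mem_notMem hS.1 hO hOF' hSO.subset hC hs₀ hsS
      (by_contra fun hs₀C => hsep (iff_of_false hsC hs₀C)) hsC

/-- Every element is joined to a fixed `h₀ ∈ F \ F'` by a circuit avoiding the twins `T` of `s₀`:
through `C₀` for the handle, through `C₀` and the connectivity of `F' \ S` for `F' \ S`, and
through a new circuit separating it from `s₀` for `S \ T`. -/
theorem IsHandleStep.connectedOn_sdiff_newCircuitTwins (h : M.IsHandleStep F' F)
    (hS : M.NondisconnectiveHandleOn F' S) {C₀ : Finset E} (hC₀ : M.IsNewCircuit F' F C₀) {w₀ : E}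
    (hw₀C₀ : w₀ ∈ C₀) (hw₀ : w₀ ∈ F' \ S) (hs₀ : s₀ ∈ S) (hs₀C₀ : s₀ ∉ C₀) :
    M.ConnectedOn (F \ M.newCircuitTwins F' F S s₀) := by
  obtain ⟨h₀, hh₀⟩ := h.handleOn.1
  have hC₀T := hC₀.subset_sdiff_newCircuitTwins (S := S) hs₀C₀
  have hh₀C₀ : h₀ ∈ C₀ := h.sdiff_subset_of_isNewCircuit hC₀ hh₀
  refine connectedOn_of_hub (hC₀T hh₀C₀) fun x hx hxh₀ => ?_
  obtain ⟨hxF, hxT⟩ := mem_sdiff.1 hx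
  by_cases hxC₀ : x ∈ C₀
  · exact ⟨C₀, hC₀.isCircuit, hC₀T, hxC₀, hh₀C₀⟩
  have hxF' : x ∈ F' :=
    by_contra fun hxF' => hxC₀ (h.sdiff_subset_of_isNewCircuit hC₀ (mem_sdiff.2 ⟨hxF, hxF'⟩))
  by_cases hxS : x ∈ S
  · obtain ⟨C, hC, hxC, hs₀C⟩ :=
      h.exists_isNewCircuit_of_mem_sdiff_newCircuitTwins hS hs₀ (mem_sdiff.2 ⟨hxS, hxT⟩)
    exact ⟨C, hC.isCircuit, hC.subset_sdiff_newCircuitTwins hs₀C, hxC,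
      h.sdiff_subset_of_isNewCircuit hC hh₀⟩
  obtain ⟨D, hD, hDsub, hxD, hw₀D⟩ :=
    hS.2.2 x (mem_sdiff.2 ⟨hxF', hxS⟩) w₀ hw₀ fun hxw₀ => hxC₀ (hxw₀ ▸ hw₀C₀)
  have hDT : D ⊆ F \ M.newCircuitTwins F' F S s₀ := fun y hy =>
    mem_sdiff.2 ⟨h.subset (mem_sdiff.1 (hDsub hy)).1,
      fun hyT => (mem_sdiff.1 (hDsub hy)).2 (newCircuitTwins_subset hyT)⟩
  obtain ⟨D', hD', hD'sub, hxD', hh₀D'⟩ :=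
    hD.exists_isCircuit_subset_union hC₀.isCircuit hw₀D hw₀C₀ hxD hh₀C₀
  exact ⟨D', hD', hD'sub.trans (union_subset hDT hC₀T), hxD', hh₀D'⟩

theorem IsHandleStep.exists_nondisconnectiveHandleOn_subset (h : M.IsHandleStep F' F)
    (hS : M.NondisconnectiveHandleOn F' S) : ∃ T ⊆ S, M.NondisconnectiveHandleOn F T := by
  obtain ⟨C₀, hC₀, ⟨w₀, hw₀C₀, hw₀⟩, s₀, hs₀, hs₀C₀⟩ := h.exists_isNewCircuit_mem_sdiff_notMem hS
  exact ⟨M.newCircuitTwins F' F S s₀, newCircuitTwins_subset,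
    hS.1.handleOn_newCircuitTwins h.subset hs₀,
    h.connectedOn_sdiff_newCircuitTwins hS hC₀ hw₀C₀ hw₀ hs₀ hs₀C₀⟩

theorem IsHandleStep.exists_cons (h : M.IsHandleStep F' F) {n : ℕ} {T : Fin n → Finset E}
    (hT : Pairwise (Disjoint on T)) (hTF' : ∀ i, T i ⊆ F')
    (hTF : ∀ i, M.NondisconnectiveHandleOn F (T i)) :
    ∃ T' : Fin (n + 1) → Finset E,
      Pairwise (Disjoint on T') ∧ ∀ i, M.NondisconnectiveHandleOn F (T' i) :=
  ⟨Fin.cons (F \ F') T,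
    Fin.pairwise_disjoint_cons (fun i => disjoint_sdiff_self_left.mono_right (hTF' i)) hT,
    Fin.cases h.nondisconnectiveHandleOn_sdiff_left hTF⟩

end HandleStep

theorem exists_nondisconnectiveHandleOn_family (F : ℕ → Finset E) (hF₁ : M.IsCircuit (F 1))
    {k : ℕ} (hk : 2 ≤ k) (hstep : ∀ i, 1 ≤ i → i < k → M.IsHandleStep (F i) (F (i + 1))) :
    ∃ T : Fin (k + 1) → Finset E,
      Pairwise (Disjoint on T) ∧ ∀ i, M.NondisconnectiveHandleOn (F k) (T i) := by
  induction k, hk using Nat.le_induction with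
  | base =>
    have h := hstep 1 le_rfl one_lt_two
    obtain ⟨T₁, T₂, hdisj, hT₁, hT₂, hT₁h, hT₂h⟩ := h.exists_disjoint_nondisconnectiveHandleOn hF₁
    exact h.exists_cons (T := Fin.cons T₁ fun _ : Fin 1 => T₂)
      (Fin.pairwise_disjoint_cons (fun _ => hdisj) Subsingleton.pairwise)
      (Fin.cases hT₁ fun _ => hT₂) (Fin.cases hT₁h fun _ => hT₂h)
  | succ k hk ih =>
    obtain ⟨T, hT, hTh⟩ := ih fun i h₁ h₂ => hstep i h₁ (by omega)
    have h := hstep k (by omega) (by omega)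
    choose T' hT'T hT'h using fun i => h.exists_nondisconnectiveHandleOn_subset (hTh i)
    exact h.exists_cons (hT.mono fun i j => Disjoint.mono (hT'T i) (hT'T j))
      (fun i => (hT'T i).trans (hTh i).1.2.1) hT'h

theorem nondisconnectiveHandleOn_univ_iff {T : Finset E} :
    M.NondisconnectiveHandleOn univ T ↔ M.Handle T ∧ M.ConnectedOn Tᶜ := by
  simp [NondisconnectiveHandleOn, HandleOn, Handle, compl_eq_univ_sdiff]

theorem exists_k_add_one_nondisconnective_handles_general
    (M : FinMatroid E) (k : ℕ) (hk : 2 ≤ k)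
    (F : ℕ → Finset E)
    (hF1 : M.IsCircuit (F 1)) (hFk : F k = Finset.univ)
    (hchain : ∀ i, 1 ≤ i → i < k → F i ⊂ F (i + 1))
    (hFconn : ∀ i, 1 ≤ i → i ≤ k → M.ConnectedOn (F i))
    (hhandle : ∀ i, 2 ≤ i → i ≤ k → M.HandleOn (F i) (F i \ F (i - 1))) :
    ∃ H : Fin (k + 1) → Finset E,
      (∀ i j, i ≠ j → Disjoint (H i) (H j)) ∧
      ∀ i, M.Handle (H i) ∧ M.ConnectedOn (H i)ᶜ := by
  have hstep : ∀ i, 1 ≤ i → i < k → M.IsHandleStep (F i) (F (i + 1)) := fun i h₁ h₂ =>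
    ⟨(hchain i h₁ h₂).subset, hFconn i h₁ h₂.le, hFconn (i + 1) (by omega) h₂,
      by simpa using hhandle (i + 1) (by omega) h₂⟩
  obtain ⟨H, hdisj, hH⟩ := exists_nondisconnectiveHandleOn_family F hF1 hk hstep
  rw [hFk] at hH
  exact ⟨H, hdisj, fun i => nondisconnectiveHandleOn_univ_iff.1 (hH i)⟩

/-- **Theorem (Lower bound for non-disconnective handles).**
Let `M` be a connected matroid on a finite set `E` admitting a handle decomposition
`F₁ ⊊ ⋯ ⊊ F_k = E` of length `k ≥ 2`.  Then `M` has at least `k + 1` pairwise disjoint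
non-disconnective handles: handles `H₀, …, H_k` such that each deletion `M ∖ Hᵢ`
is connected. -/
theorem exists_k_add_one_nondisconnective_handles
    (M : FinMatroid E) (hconn : M.Connected) (k : ℕ) (hk : 2 ≤ k)
    (F : ℕ → Finset E)
    (hF1 : M.IsCircuit (F 1)) (hFk : F k = Finset.univ)
    (hchain : ∀ i, 1 ≤ i → i < k → F i ⊂ F (i + 1))
    (hFconn : ∀ i, 1 ≤ i → i ≤ k → M.ConnectedOn (F i))
    (hhandle : ∀ i, 2 ≤ i → i ≤ k → M.HandleOn (F i) (F i \ F (i - 1))) :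
    ∃ H : Fin (k + 1) → Finset E,
      (∀ i j, i ≠ j → Disjoint (H i) (H j)) ∧
      ∀ i, M.Handle (H i) ∧ M.ConnectedOn (H i)ᶜ :=
  exists_k_add_one_nondisconnective_handles_general M k hk F hF1 hFk hchain hFconn hhandle

end FinMatroid
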